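/- arXiv:2011.09441 — 6 statements merged into one kernel-verified Lean document; each statement's English description precedes it below -/
import Mathlib

section
/- For every finite DAG G and every matching M : S → T in TC(G), there exist a positive integer k, a partition (S_1, …, S_k) of S, and a partition (T_1, …, T_k) of T, with M(S_i) = T_i for all i ∈ [k], such that: (1) the sweeping graphs are pairwise vertex-disjoint, i.e., V(H(S_i, T_i)) ∩ V(H(S_j, T_j)) = ∅ for all i ≠ j in [k]; and (2) for all i ∈ [k] and all (x, y) ∈ S_i × T_i with x ≺ y, there exists a matching M̂ : S_i → T_i in TC(G) with (x, y) ∈ M̂. -/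
/-!
View the pairs of `M` as the vertices of an auxiliary digraph with an arc `a → b` whenever
`a.1 ⪯ b.2`, and take the parts to be its strongly connected components. If the sweeping graphs
of two components meet in `z`, with `p.1 ⪯ z ⪯ q.2` and `p'.1 ⪯ z ⪯ q'.2`, then `p → q'` and
`p' → q`, so the two components coincide.

Inside a component `C`, a pair `(p.1, q.2)` with `p.1 ⪯ q.2` extends to a perfect matching of the
tails of `C` with its heads by Hall's theorem, applied to `a ~ b ↔ a.1 ⪯ b.2` with `p` forced
to `q`: a set `A` of pairs containing `p` sees every pair of `A.erase p` (each sees itself) and one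
more, namely `q`, or, if `q ∈ A`, the first arc leaving `A.erase p` on a path from `q` back to `p`.
-/

/-- Strict reachability in a DAG with edge relation `E`. -/
def StrictReach {V : Type*} (E : V → V → Prop) (x y : V) : Prop :=
  Relation.ReflTransGen E x y ∧ x ≠ y

/-- A matching in the transitive closure of the DAG, represented as a finite set of
pairs `(s, t)` with `s ≺ t` whose endpoints are all distinct. Its set of lower
endpoints is `M.image Prod.fst` and its set of upper endpoints is `M.image Prod.snd`. -/
def IsMatching {V : Type*} (E : V → V → Prop) (M : Finset (V × V)) : Prop :=
  (∀ p ∈ M, StrictReach E p.1 p.2) ∧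
  (∀ p ∈ M, ∀ q ∈ M, p ≠ q → p.1 ≠ q.1 ∧ p.1 ≠ q.2 ∧ p.2 ≠ q.1 ∧ p.2 ≠ q.2)

/-- Vertex set of the `(S,T)`-sweeping graph. -/
def sweepV {V : Type*} (E : V → V → Prop) (S T : Finset V) : Set V :=
  {z | ∃ s ∈ S, ∃ t ∈ T, Relation.ReflTransGen E s z ∧ Relation.ReflTransGen E z t}


open Relation Finset

namespace Relation.ReflTransGen

variable {α : Type*} {r : α → α → Prop} {a b : α}

theorem exists_rel_of_mem_of_notMem {s : Set α} (h : ReflTransGen r a b) (ha : a ∈ s)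
    (hb : b ∉ s) : ∃ x ∈ s, ∃ y ∉ s, r x y := by
  induction h with
  | refl => exact absurd ha hb
  | @tail c d _ hcd ih =>
    by_cases hc : c ∈ s
    · exact ⟨c, hc, d, hb, hcd⟩
    · exact ih hc

theorem restrict_between (h : ReflTransGen r a b) :
    ReflTransGen (fun x y => r x y ∧ ReflTransGen r a x ∧ ReflTransGen r y b) a b := by
  suffices ∀ c, ReflTransGen r a c → ReflTransGen r c b →
      ReflTransGen (fun x y => r x y ∧ ReflTransGen r a x ∧ ReflTransGen r y b) c b from
    this a .refl h
  intro c hac hcb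
  induction hcb using head_induction_on with
  | refl => exact .refl
  | head hcd hdb ih => exact .head ⟨hcd, hac, hdb⟩ (ih (hac.tail hcd))

end Relation.ReflTransGen

section

variable {V : Type*} {E : V → V → Prop}

def MatchLink (E : V → V → Prop) (C : Finset (V × V)) (a b : V × V) : Prop :=
  a ∈ C ∧ b ∈ C ∧ ReflTransGen E a.1 b.2

namespace IsMatching

variable {C M : Finset (V × V)} {a b p q : V × V}

theorem mono (hM : IsMatching E M) (hCM : C ⊆ M) : IsMatching E C :=
  ⟨fun a ha => hM.1 a (hCM ha), fun a ha b hb => hM.2 a (hCM ha) b (hCM hb)⟩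

theorem reach (hM : IsMatching E M) (ha : a ∈ M) : ReflTransGen E a.1 a.2 :=
  (hM.1 a ha).1

theorem fst_ne_snd (hM : IsMatching E M) (ha : a ∈ M) (hb : b ∈ M) : a.1 ≠ b.2 := by
  obtain rfl | hab := eq_or_ne a b
  · exact (hM.1 a ha).2
  · exact (hM.2 a ha b hb hab).2.1

theorem eq_of_fst_eq (hM : IsMatching E M) (ha : a ∈ M) (hb : b ∈ M) (h : a.1 = b.1) : a = b :=
  by_contra fun hab => (hM.2 a ha b hb hab).1 h

theorem eq_of_snd_eq (hM : IsMatching E M) (ha : a ∈ M) (hb : b ∈ M) (h : a.2 = b.2) : a = b :=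
  by_contra fun hab => (hM.2 a ha b hb hab).2.2.2 h

theorem exists_perm_apply_eq (hC : IsMatching E C) (hp : p ∈ C) (hq : q ∈ C)
    (hpq : ReflTransGen E p.1 q.2) (hqp : ReflTransGen (MatchLink E C) q p) :
    ∃ σ : Equiv.Perm C, σ ⟨p, hp⟩ = ⟨q, hq⟩ ∧
      ∀ a : C, ReflTransGen E (a : V × V).1 (σ a : V × V).2 := by
  classical
  set p' : C := ⟨p, hp⟩
  set q' : C := ⟨q, hq⟩
  let r : C → C → Prop := fun a b =>
    ReflTransGen E (a : V × V).1 (b : V × V).2 ∧ (a = p' → b = q')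
  have hall : ∀ A : Finset C, #A ≤ #{b | ∃ a ∈ A, r a b} := by
    intro A
    have hself : A.erase p' ⊆ ({b | ∃ a ∈ A, r a b} : Finset C) := fun a ha =>
      mem_filter.2 ⟨mem_univ _, a, mem_of_mem_erase ha, hC.reach a.2,
        fun h => absurd h (ne_of_mem_erase ha)⟩
    by_cases hpA : p' ∈ A
    swap
    · simpa [erase_eq_of_notMem hpA] using card_le_card hself
    obtain ⟨b, hbN, hbA⟩ : ∃ b ∈ ({b | ∃ a ∈ A, r a b} : Finset C), b ∉ A.erase p' := by
      by_cases hqA : q' ∈ A.erase p'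
      · obtain ⟨x, hx, y, hy, hxC, hyC, hxy⟩ := hqp.exists_rel_of_mem_of_notMem
          (s := Subtype.val '' (A.erase p' : Set C)) ⟨q', hqA, rfl⟩
          (by rintro ⟨a, ha, rfl⟩; exact ne_of_mem_erase ha rfl)
        obtain ⟨a, ha, rfl⟩ := hx
        refine ⟨⟨y, hyC⟩, mem_filter.2 ⟨mem_univ _, a, mem_of_mem_erase ha, hxy,
          fun h => absurd h (ne_of_mem_erase ha)⟩, fun h => hy ⟨_, h, rfl⟩⟩
      · exact ⟨q', mem_filter.2 ⟨mem_univ _, p', hpA, hpq, fun _ => rfl⟩, hqA⟩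
    calc #A = #(insert b (A.erase p')) := by
          rw [card_insert_of_notMem hbA, card_erase_add_one hpA]
      _ ≤ _ := card_le_card (insert_subset hbN hself)
  obtain ⟨f, hf, hfr⟩ := (Fintype.all_card_le_filter_rel_iff_exists_injective r).1 hall
  exact ⟨.ofBijective f (Finite.injective_iff_bijective.1 hf), (hfr p').2 rfl,
    fun a => (hfr a).1⟩

end IsMatching

section Rearrangement

variable [DecidableEq V] {C : Finset (V × V)}

def rewire (C : Finset (V × V)) (σ : Equiv.Perm C) : Finset (V × V) :=
  univ.image fun a : C => ((a : V × V).1, (σ a : V × V).2)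

theorem isMatching_rewire (hC : IsMatching E C) {σ : Equiv.Perm C}
    (hσ : ∀ a : C, ReflTransGen E (a : V × V).1 (σ a : V × V).2) :
    IsMatching E (rewire C σ) := by
  simp only [IsMatching, rewire, mem_image, mem_univ, true_and, forall_exists_index,
    forall_apply_eq_imp_iff]
  refine ⟨fun a => ⟨hσ a, hC.fst_ne_snd a.2 (σ a).2⟩, fun a b hne => ?_⟩
  have hab : a ≠ b := by rintro rfl; exact hne rfl
  exact ⟨fun h => hab (Subtype.ext (hC.eq_of_fst_eq a.2 b.2 h)), hC.fst_ne_snd a.2 (σ b).2,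
    (hC.fst_ne_snd b.2 (σ a).2).symm,
    fun h => hab (σ.injective (Subtype.ext (hC.eq_of_snd_eq (σ a).2 (σ b).2 h)))⟩

theorem image_fst_rewire (σ : Equiv.Perm C) : (rewire C σ).image Prod.fst = C.image Prod.fst := by
  ext x
  simp [rewire]

theorem image_snd_rewire (σ : Equiv.Perm C) : (rewire C σ).image Prod.snd = C.image Prod.snd := by
  ext x
  simp only [rewire, image_image, mem_image, mem_univ, true_and]
  constructor
  · rintro ⟨a, rfl⟩
    exact ⟨σ a, (σ a).2, rfl⟩
  · rintro ⟨b, hb, rfl⟩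
    exact ⟨σ.symm ⟨b, hb⟩, by simp⟩

theorem IsMatching.exists_rearrangement {p q : V × V} (hC : IsMatching E C) (hp : p ∈ C) (hq : q ∈ C)
    (hpq : ReflTransGen E p.1 q.2) (hqp : ReflTransGen (MatchLink E C) q p) :
    ∃ M' : Finset (V × V), IsMatching E M' ∧ (p.1, q.2) ∈ M' ∧
      M'.image Prod.fst = C.image Prod.fst ∧ M'.image Prod.snd = C.image Prod.snd := by
  obtain ⟨σ, hσpq, hσ⟩ := hC.exists_perm_apply_eq hp hq hpq hqp
  exact ⟨rewire C σ, isMatching_rewire hC hσ, mem_image.2 ⟨⟨p, hp⟩, mem_univ _, by rw [hσpq]⟩,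
    image_fst_rewire σ, image_snd_rewire σ⟩

end Rearrangement

section Components

variable [DecidableEq V] (E) (M : Finset (V × V))

open Classical in
noncomputable def linkComponents : Finpartition M :=
  .ofSetSetoid (AntisymmRel.setoid _ (ReflTransGen (MatchLink E M))) M

variable {E M} {C D : Finset (V × V)} {a b : V × V}

theorem mem_linkComponents_iff (hC : C ∈ (linkComponents E M).parts) (ha : a ∈ C) :
    b ∈ C ↔ b ∈ M ∧ AntisymmRel (ReflTransGen (MatchLink E M)) a b := by
  rw [← (linkComponents E M).part_eq_of_mem hC ha, linkComponents,
    Finpartition.mem_part_ofSetSetoid_iff_rel]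
  exact and_iff_right ((linkComponents E M).le hC ha)

theorem reflTransGen_matchLink_of_mem_linkComponents (hC : C ∈ (linkComponents E M).parts)
    (ha : a ∈ C) (hb : b ∈ C) : ReflTransGen (MatchLink E C) a b := by
  obtain ⟨-, hab, hba⟩ := (mem_linkComponents_iff hC ha).1 hb
  refine ReflTransGen.mono ?_ _ _ hab.restrict_between
  rintro x y ⟨hxy, hax, hyb⟩
  have hx : x ∈ C := (mem_linkComponents_iff hC ha).2
    ⟨hxy.1, hax, (hyb.head hxy).trans hba⟩
  have hy : y ∈ C := (mem_linkComponents_iff hC ha).2 ⟨hxy.2.1, hax.tail hxy, hyb.trans hba⟩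
  exact ⟨hx, hy, hxy.2.2⟩

theorem disjoint_sweepV_linkComponents (hC : C ∈ (linkComponents E M).parts)
    (hD : D ∈ (linkComponents E M).parts) (hCD : C ≠ D) :
    Disjoint (sweepV E (C.image Prod.fst) (C.image Prod.snd))
      (sweepV E (D.image Prod.fst) (D.image Prod.snd)) := by
  rw [Set.disjoint_left]
  rintro z ⟨_, hs, _, ht, hsz, hzt⟩ ⟨_, hs', _, ht', hsz', hzt'⟩
  obtain ⟨p, hp, rfl⟩ := mem_image.1 hs
  obtain ⟨q, hq, rfl⟩ := mem_image.1 ht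
  obtain ⟨p', hp', rfl⟩ := mem_image.1 hs'
  obtain ⟨q', hq', rfl⟩ := mem_image.1 ht'
  have hCM := (linkComponents E M).le hC
  have hDM := (linkComponents E M).le hD
  have hpq' : MatchLink E M p q' := ⟨hCM hp, hDM hq', hsz.trans hzt'⟩
  have hp'q : MatchLink E M p' q := ⟨hDM hp', hCM hq, hsz'.trans hzt⟩
  have hp'C : p' ∈ C := (mem_linkComponents_iff hC hp).2 ⟨hDM hp',
    (ReflTransGen.single hpq').trans ((mem_linkComponents_iff hD hq').1 hp').2.1,
    (ReflTransGen.single hp'q).trans ((mem_linkComponents_iff hC hq).1 hp).2.1⟩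
  exact hCD ((linkComponents E M).eq_of_mem_parts hC hD hp'C hp')

end Components

end

theorem matching_decomposition_general {V : Type*} [DecidableEq V] (E : V → V → Prop)
    (M : Finset (V × V)) (hM : IsMatching E M) :
    ∃ (k : ℕ), 1 ≤ k ∧ ∃ Ms : Fin k → Finset (V × V),
      -- the `Ms i` partition `M` (hence `M(S_i) = T_i` for all `i`)
      (∀ i j : Fin k, i ≠ j → Disjoint (Ms i) (Ms j)) ∧
      (∀ p : V × V, p ∈ M ↔ ∃ i : Fin k, p ∈ Ms i) ∧
      -- (1) sweeping graph disjointness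
      (∀ i j : Fin k, i ≠ j →
        Disjoint (sweepV E ((Ms i).image Prod.fst) ((Ms i).image Prod.snd))
                 (sweepV E ((Ms j).image Prod.fst) ((Ms j).image Prod.snd))) ∧
      -- (2) matching rearrangement property
      (∀ i : Fin k, ∀ x ∈ (Ms i).image Prod.fst, ∀ y ∈ (Ms i).image Prod.snd,
        StrictReach E x y →
          ∃ M' : Finset (V × V), IsMatching E M' ∧ (x, y) ∈ M' ∧
            M'.image Prod.fst = (Ms i).image Prod.fst ∧
            M'.image Prod.snd = (Ms i).image Prod.snd) := by
  obtain rfl | hMne := M.eq_empty_or_nonempty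
  · refine ⟨1, le_rfl, fun _ => ∅, ?_, ?_, ?_, ?_⟩ <;> simp
  set P := linkComponents E M
  let Ms : Fin #P.parts → Finset (V × V) := fun i => P.parts.equivFin.symm i
  have hMs : ∀ i, Ms i ∈ P.parts := fun i => (P.parts.equivFin.symm i).2
  have hMs_inj : Function.Injective Ms :=
    Subtype.val_injective.comp P.parts.equivFin.symm.injective
  refine ⟨#P.parts, card_pos.2 (P.parts_nonempty hMne.ne_empty), Ms,
    fun i j hij => P.disjoint (hMs i) (hMs j) (hMs_inj.ne hij), fun x => ⟨fun hx => ?_, ?_⟩,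
    fun i j hij => disjoint_sweepV_linkComponents (hMs i) (hMs j) (hMs_inj.ne hij), ?_⟩
  · obtain ⟨C, hC, hxC⟩ := P.exists_mem hx
    exact ⟨P.parts.equivFin ⟨C, hC⟩, by simpa [Ms] using hxC⟩
  · rintro ⟨i, hi⟩
    exact P.le (hMs i) hi
  · rintro i _ hx _ hy hxy
    obtain ⟨p, hp, rfl⟩ := mem_image.1 hx
    obtain ⟨q, hq, rfl⟩ := mem_image.1 hy
    exact (hM.mono (P.le (hMs i))).exists_rearrangement hp hq hxy.1
      (reflTransGen_matchLink_of_mem_linkComponents (hMs i) hq hp)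

/-- Matching decomposition lemma for DAGs: any matching `M` in `TC(G)` can be split into
parts `Ms i` (inducing partitions `S_i = (Ms i).image Prod.fst` of `S` and
`T_i = (Ms i).image Prod.snd` of `T` with `M(S_i) = T_i`) whose sweeping graphs are
pairwise vertex-disjoint and which satisfy the matching rearrangement property. -/
theorem matching_decomposition {V : Type*} [Fintype V] [DecidableEq V] (E : V → V → Prop)
    (hacyc : ∀ x y : V, Relation.ReflTransGen E x y → Relation.ReflTransGen E y x → x = y)
    (M : Finset (V × V)) (hM : IsMatching E M) :
    ∃ (k : ℕ), 1 ≤ k ∧ ∃ Ms : Fin k → Finset (V × V),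
      -- the `Ms i` partition `M` (hence `M(S_i) = T_i` for all `i`)
      (∀ i j : Fin k, i ≠ j → Disjoint (Ms i) (Ms j)) ∧
      (∀ p : V × V, p ∈ M ↔ ∃ i : Fin k, p ∈ Ms i) ∧
      -- (1) sweeping graph disjointness
      (∀ i j : Fin k, i ≠ j →
        Disjoint (sweepV E ((Ms i).image Prod.fst) ((Ms i).image Prod.snd))
                 (sweepV E ((Ms j).image Prod.fst) ((Ms j).image Prod.snd))) ∧
      -- (2) matching rearrangement property
      (∀ i : Fin k, ∀ x ∈ (Ms i).image Prod.fst, ∀ y ∈ (Ms i).image Prod.snd,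
        StrictReach E x y →
          ∃ M' : Finset (V × V), IsMatching E M' ∧ (x, y) ∈ M' ∧
            M'.image Prod.fst = (Ms i).image Prod.fst ∧
            M'.image Prod.snd = (Ms i).image Prod.snd) :=
  matching_decomposition_general E M hM
end

section
/- Let G be a finite DAG, let f : V(G) → ℝ, and let M be a max-weight, min-cardinality matching in TC(G) with respect to f. Then (a) f(x) > f(y) for every pair (x,y) ∈ M, and (b) |M| ≥ ε(f) · |V(G)| / 2. -/
/-- The weight of a matching with respect to `f`. -/
noncomputable def matchWeight {V : Type*} (f : V → ℝ) (M : Finset (V × V)) : ℝ :=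
  ∑ p ∈ M, (f p.1 - f p.2)

/-- A max-weight, min-cardinality matching in `TC(G)` with respect to `f`. -/
def MaxWeightMinCard {V : Type*} (E : V → V → Prop) (f : V → ℝ) (M : Finset (V × V)) : Prop :=
  IsMatching E M ∧
  (∀ M' : Finset (V × V), IsMatching E M' → matchWeight f M' ≤ matchWeight f M) ∧
  (∀ M' : Finset (V × V), IsMatching E M' → matchWeight f M' = matchWeight f M →
    M.card ≤ M'.card)

/-- Distance to monotonicity of `f : V → ℝ` over a DAG with edge relation `E`. -/
noncomputable def distMonoDAG {V : Type*} [Fintype V] (E : V → V → Prop) (f : V → ℝ) : ℝ :=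
  ((sInf {n : ℕ | ∃ g : V → ℝ,
      (∀ x y : V, Relation.ReflTransGen E x y → g x ≤ g y) ∧
      n = Nat.card {x : V // f x ≠ g x}} : ℕ) : ℝ) / Fintype.card V

lemma matching_erase {V : Type*} [DecidableEq (V × V)] (E : V → V → Prop) (M : Finset (V × V))
    (h : IsMatching E M) (p : V × V) : IsMatching E (M.erase p) :=
  ⟨fun q hq => h.1 q (Finset.mem_of_mem_erase hq),
    fun q hq r hr => h.2 q (Finset.mem_of_mem_erase hq) r (Finset.mem_of_mem_erase hr)⟩

lemma part_a {V : Type*} (E : V → V → Prop) (f : V → ℝ) (M : Finset (V × V))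
    (hM : MaxWeightMinCard E f M) : ∀ p ∈ M, f p.1 > f p.2 := by
  classical
  intro p hp
  by_contra h
  push_neg at h
  have hmatch := matching_erase E M hM.1 p
  have hw : matchWeight f (M.erase p) + (f p.1 - f p.2) = matchWeight f M := by
    unfold matchWeight
    exact Finset.sum_erase_add M _ hp
  have hle := hM.2.1 _ hmatch
  have hweq : matchWeight f (M.erase p) = matchWeight f M := by
    have : f p.1 = f p.2 := by linarith
    rw [← hw, this]; ring
  have hge := hM.2.2 _ hmatch hweq
  have hcard : (M.erase p).card < M.card := Finset.card_erase_lt_of_mem hp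
  omega

lemma unmatched_mono {V : Type*} (E : V → V → Prop) (f : V → ℝ) (M : Finset (V × V))
    (hM : MaxWeightMinCard E f M) (u v : V)
    (hu : ∀ p ∈ M, p.1 ≠ u ∧ p.2 ≠ u) (hv : ∀ p ∈ M, p.1 ≠ v ∧ p.2 ≠ v)
    (huv : Relation.ReflTransGen E u v) : f u ≤ f v := by
  classical
  by_contra h
  push_neg at h
  have hne : u ≠ v := by rintro rfl; exact lt_irrefl _ h
  have hnotmem : (u, v) ∉ M := fun hm => (hu _ hm).1 rfl
  have hmatch : IsMatching E (insert (u, v) M) := by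
    obtain ⟨h1, h2⟩ := hM.1
    constructor
    · intro p hp
      rcases Finset.mem_insert.1 hp with rfl | hp
      · exact ⟨huv, hne⟩
      · exact h1 p hp
    · intro p hp q hq hpq
      rcases Finset.mem_insert.1 hp with rfl | hp <;>
        rcases Finset.mem_insert.1 hq with rfl | hq
      · exact absurd rfl hpq
      · exact ⟨((hu q hq).1).symm, ((hu q hq).2).symm,
          ((hv q hq).1).symm, ((hv q hq).2).symm⟩
      · exact ⟨(hu p hp).1, (hv p hp).1, (hu p hp).2, (hv p hp).2⟩
      · exact h2 p hp q hq hpq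
  have hw : matchWeight f (insert (u, v) M) = (f u - f v) + matchWeight f M := by
    unfold matchWeight; rw [Finset.sum_insert hnotmem]
  have hle := hM.2.1 _ hmatch
  rw [hw] at hle
  linarith


/-- A max-weight, min-cardinality matching consists of violated pairs and is
at least half as large as `ε(f) · |V|`. -/
theorem max_weight_min_card_matching {V : Type*} [Fintype V] (E : V → V → Prop)
    (hacyc : ∀ x y : V, Relation.ReflTransGen E x y → Relation.ReflTransGen E y x → x = y)
    (f : V → ℝ) (M : Finset (V × V)) (hM : MaxWeightMinCard E f M) :
    (∀ p ∈ M, f p.1 > f p.2) ∧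
    (M.card : ℝ) ≥ distMonoDAG E f * Fintype.card V / 2 := by
  classical
  refine ⟨part_a E f M hM, ?_⟩
  set T : Finset V := M.image Prod.fst ∪ M.image Prod.snd with hT
  have hTcard : T.card ≤ 2 * M.card := by
    calc T.card ≤ (M.image Prod.fst).card + (M.image Prod.snd).card :=
          Finset.card_union_le _ _
      _ ≤ M.card + M.card := add_le_add Finset.card_image_le Finset.card_image_le
      _ = 2 * M.card := by ring
  by_cases hV : Nonempty V
  · have hune : (Finset.univ : Finset V).Nonempty := Finset.univ_nonempty
    set c : ℝ := Finset.univ.inf' hune f with hc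
    set U : V → Prop := fun u => ∀ p ∈ M, p.1 ≠ u ∧ p.2 ≠ u with hU
    set S : V → Finset V :=
      fun x => Finset.univ.filter (fun u => U u ∧ Relation.ReflTransGen E u x) with hS
    set g : V → ℝ := fun x => if h : (S x).Nonempty then (S x).sup' h f else c with hg
    have hSsub : ∀ x y, Relation.ReflTransGen E x y → S x ⊆ S y := by
      intro x y hxy u hu
      simp only [hS, Finset.mem_filter, Finset.mem_univ, true_and] at hu ⊢
      exact ⟨hu.1, hu.2.trans hxy⟩
    have hgmono : ∀ x y : V, Relation.ReflTransGen E x y → g x ≤ g y := by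
      intro x y hxy
      by_cases hx : (S x).Nonempty
      · have hy : (S y).Nonempty := hx.mono (hSsub x y hxy)
        simp only [hg, dif_pos hx, dif_pos hy]
        exact Finset.sup'_mono f (hSsub x y hxy) hx
      · by_cases hy : (S y).Nonempty
        · simp only [hg, dif_neg hx, dif_pos hy]
          obtain ⟨u, hu⟩ := hy
          calc c ≤ f u := Finset.inf'_le f (Finset.mem_univ u)
            _ ≤ (S y).sup' ⟨u, hu⟩ f := Finset.le_sup' f hu
        · simp [hg, dif_neg hx, dif_neg hy]
    have hgU : ∀ u, U u → g u = f u := by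
      intro u hu
      have hmem : u ∈ S u := by
        simp only [hS, Finset.mem_filter, Finset.mem_univ, true_and]
        exact ⟨hu, Relation.ReflTransGen.refl⟩
      have hne' : (S u).Nonempty := ⟨u, hmem⟩
      simp only [hg, dif_pos hne']
      apply le_antisymm
      · apply Finset.sup'_le
        intro v hv
        simp only [hS, Finset.mem_filter, Finset.mem_univ, true_and] at hv
        exact unmatched_mono E f M hM v u hv.1 hu hv.2
      · exact Finset.le_sup' f hmem
    have hdiff : (Finset.univ.filter (fun x => f x ≠ g x)) ⊆ T := by
      intro x hx
      simp only [Finset.mem_filter, Finset.mem_univ, true_and] at hx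
      by_contra hxT
      apply hx
      have hUx : U x := by
        intro p hp
        refine ⟨fun e => hxT ?_, fun e => hxT ?_⟩
        · exact Finset.mem_union_left _ (Finset.mem_image.2 ⟨p, hp, e⟩)
        · exact Finset.mem_union_right _ (Finset.mem_image.2 ⟨p, hp, e⟩)
      exact (hgU x hUx).symm
    have hcard : Nat.card {x : V // f x ≠ g x} ≤ 2 * M.card := by
      have heq : Nat.card {x : V // f x ≠ g x}
          = (Finset.univ.filter (fun x => f x ≠ g x)).card := by
        rw [Nat.card_eq_fintype_card, Fintype.card_subtype]
      rw [heq]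
      exact le_trans (Finset.card_le_card hdiff) hTcard
    have hsInf : sInf {n : ℕ | ∃ g' : V → ℝ,
        (∀ x y : V, Relation.ReflTransGen E x y → g' x ≤ g' y) ∧
        n = Nat.card {x : V // f x ≠ g' x}} ≤ 2 * M.card :=
      le_trans (Nat.sInf_le ⟨g, hgmono, rfl⟩) hcard
    have hcardV : (0 : ℝ) < Fintype.card V := by
      exact_mod_cast Fintype.card_pos
    have hprod : distMonoDAG E f * Fintype.card V
        = ((sInf {n : ℕ | ∃ g' : V → ℝ,
            (∀ x y : V, Relation.ReflTransGen E x y → g' x ≤ g' y) ∧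
            n = Nat.card {x : V // f x ≠ g' x}} : ℕ) : ℝ) := by
      unfold distMonoDAG
      rw [div_mul_cancel₀ _ (ne_of_gt hcardV)]
    rw [ge_iff_le, hprod]
    have : ((sInf {n : ℕ | ∃ g' : V → ℝ,
        (∀ x y : V, Relation.ReflTransGen E x y → g' x ≤ g' y) ∧
        n = Nat.card {x : V // f x ≠ g' x}} : ℕ) : ℝ) ≤ 2 * M.card := by
      exact_mod_cast hsInf
    linarith
  · have h0 : Fintype.card V = 0 := by
      rw [not_nonempty_iff] at hV; exact Fintype.card_eq_zero
    rw [h0]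
    simp
end

section
/- Let G be a finite DAG, let f : V(G) → ℝ, and let M : S → T be a max-weight, min-cardinality matching in TC(G) with respect to f, where S and T are the sets of lower and upper endpoints of M. Then for every matching M̂ : S → T in TC(G) with the same endpoint sets S and T, and every pair (x,y) ∈ M̂, we have f(x) > f(y). In particular, for all x ∈ S and y ∈ T with x ≺ y for which some matching M̂ : S → T in TC(G) contains (x,y), it holds that f(x) > f(y). -/
/-- Every matching in `TC(G)` with the same endpoint sets as a max-weight,
min-cardinality matching consists only of violated pairs. -/
theorem rematching_violated {V : Type*} [Fintype V] [DecidableEq V] (E : V → V → Prop)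
    (hacyc : ∀ x y : V, Relation.ReflTransGen E x y → Relation.ReflTransGen E y x → x = y)
    (f : V → ℝ) (M : Finset (V × V)) (hM : MaxWeightMinCard E f M)
    (M' : Finset (V × V)) (hM' : IsMatching E M')
    (hS : M'.image Prod.fst = M.image Prod.fst)
    (hT : M'.image Prod.snd = M.image Prod.snd) :
    ∀ p ∈ M', f p.1 > f p.2 := by
  obtain ⟨hMm, hmax, hmin⟩ := hM
  have hinj : ∀ (N : Finset (V × V)), IsMatching E N →
      (∀ a ∈ N, ∀ b ∈ N, a.1 = b.1 → a = b) ∧ (∀ a ∈ N, ∀ b ∈ N, a.2 = b.2 → a = b) := by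
    intro N hN
    constructor
    · intro a ha b hb hab
      by_contra h
      exact (hN.2 a ha b hb h).1 hab
    · intro a ha b hb hab
      by_contra h
      exact (hN.2 a ha b hb h).2.2.2 hab
  have hw : ∀ N, IsMatching E N → matchWeight f N =
      (∑ x ∈ N.image Prod.fst, f x) - (∑ x ∈ N.image Prod.snd, f x) := by
    intro N hN
    unfold matchWeight
    rw [Finset.sum_image (fun a ha b hb => (hinj N hN).1 a ha b hb),
        Finset.sum_image (fun a ha b hb => (hinj N hN).2 a ha b hb),
        Finset.sum_sub_distrib]
  have hweq : matchWeight f M' = matchWeight f M := by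
    rw [hw M' hM', hw M hMm, hS, hT]
  have hcard : M'.card = M.card := by
    rw [← Finset.card_image_of_injOn (f := Prod.fst) (fun a ha b hb => (hinj M' hM').1 a ha b hb),
        hS, Finset.card_image_of_injOn (fun a ha b hb => (hinj M hMm).1 a ha b hb)]
  intro p hp
  by_contra h
  push_neg at h
  set N := M'.erase p with hN
  have hsubm : IsMatching E N := by
    refine ⟨fun q hq => hM'.1 q (Finset.mem_of_mem_erase hq), fun q hq r hr hqr =>
      hM'.2 q (Finset.mem_of_mem_erase hq) r (Finset.mem_of_mem_erase hr) hqr⟩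
  have hwN : matchWeight f N = matchWeight f M' - (f p.1 - f p.2) := by
    unfold matchWeight
    exact Finset.sum_erase_eq_sub hp
  rcases lt_or_eq_of_le h with hlt | heq
  · have : matchWeight f M < matchWeight f N := by
      rw [hwN, hweq]; linarith
    exact absurd (hmax N hsubm) (not_le.mpr this)
  · have hwN' : matchWeight f N = matchWeight f M := by rw [hwN, hweq, ← heq]; ring
    have := hmin N hsubm hwN'
    rw [hN, Finset.card_erase_of_mem hp, hcard] at this
    have hpos : 0 < M.card := hcard ▸ Finset.card_pos.mpr ⟨p, hp⟩
    omega
end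

section
/- Let d ≥ 1, let τ ≥ 1 be an integer, and let c > 0. Suppose that for every Boolean function h : {0,1}^d → {0,1} with I_h^- ≤ sqrt(d), the fraction of points x ∈ {0,1}^d that are not τ-right-persistent for h is at most c·τ/sqrt(d). Then for every integer r ≥ 2 and every function f : {0,1}^d → [r] with I_f^- ≤ sqrt(d), the fraction of points x ∈ {0,1}^d that are not τ-right-persistent for f is at most (r−1)·c·τ/sqrt(d). -/
/-- A directed hypercube edge: `y` is obtained from `x` by flipping one coordinate
from `false` to `true`. -/
def IsEdge {d : ℕ} (x y : Fin d → Bool) : Prop :=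
  ∃ i : Fin d, x i = false ∧ y i = true ∧ ∀ j : Fin d, j ≠ i → x j = y j

/-- `|S_f^-|`: the total number of violated edges of `f`. -/
noncomputable def totViol (d : ℕ) (f : (Fin d → Bool) → ℝ) : ℕ :=
  Nat.card {p : (Fin d → Bool) × (Fin d → Bool) // IsEdge p.1 p.2 ∧ f p.1 > f p.2}

/-- The set of coordinates where `x` equals `false`. -/
def zeroSet {d : ℕ} (x : Fin d → Bool) : Finset (Fin d) :=
  Finset.univ.filter (fun i => x i = false)

/-- Flip the coordinates of `x` in `T` up to `true`. -/
def flipUp {d : ℕ} (x : Fin d → Bool) (T : Finset (Fin d)) : Fin d → Bool :=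
  fun i => if i ∈ T then true else x i

/-- `x` is `τ`-right-persistent for `f` if, for a uniformly random `τ`-subset `T` of the
zero coordinates of `x`, the point obtained by flipping `T` up has value at most `f x`
with probability greater than `9/10`; points with fewer than `τ` zero coordinates are
considered persistent. -/
def RightPersistent (d τ : ℕ) (f : (Fin d → Bool) → ℝ) (x : Fin d → Bool) : Prop :=
  τ ≤ (zeroSet x).card →
    (9 : ℝ) / 10 <
      (Nat.card {T : Finset (Fin d) //
          T ⊆ zeroSet x ∧ T.card = τ ∧ f (flipUp x T) ≤ f x} : ℝ) /
        (Nat.card {T : Finset (Fin d) // T ⊆ zeroSet x ∧ T.card = τ} : ℝ)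

/-- If the fraction of non-`τ`-right-persistent points of any Boolean function `h` with
`I_h^- ≤ √d` is at most `c·τ/√d`, then for any `f : {0,1}^d → [r]` with `I_f^- ≤ √d`
the fraction of non-`τ`-right-persistent points is at most `(r-1)·c·τ/√d`. -/
theorem persistence_real_valued (d τ : ℕ) (hd : 1 ≤ d) (hτ : 1 ≤ τ) (c : ℝ) (hc : 0 < c)
    (hBool : ∀ h : (Fin d → Bool) → ℝ, (∀ x, h x = 0 ∨ h x = 1) →
      (totViol d h : ℝ) / 2 ^ d ≤ Real.sqrt d →
      (Nat.card {x : Fin d → Bool // ¬ RightPersistent d τ h x} : ℝ) / 2 ^ d ≤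
        c * τ / Real.sqrt d) :
    ∀ r : ℕ, 2 ≤ r → ∀ f : (Fin d → Bool) → ℝ,
      (∀ x, ∃ n : ℕ, 1 ≤ n ∧ n ≤ r ∧ f x = n) →
      (totViol d f : ℝ) / 2 ^ d ≤ Real.sqrt d →
      (Nat.card {x : Fin d → Bool // ¬ RightPersistent d τ f x} : ℝ) / 2 ^ d ≤
        ((r : ℝ) - 1) * c * τ / Real.sqrt d := by
  classical
  intro r hr f hf hI
  set h : ℕ → (Fin d → Bool) → ℝ := fun t y => if (t : ℝ) < f y then 1 else 0 with hh
  -- (1) violated edges of each threshold function are violated edges of f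
  have hviol : ∀ t, totViol d (h t) ≤ totViol d f := by
    intro t
    unfold totViol
    have himp : ∀ p : (Fin d → Bool) × (Fin d → Bool),
        (IsEdge p.1 p.2 ∧ h t p.1 > h t p.2) → (IsEdge p.1 p.2 ∧ f p.1 > f p.2) := by
      rintro p ⟨he, hgt⟩
      refine ⟨he, ?_⟩
      by_cases h1 : (t : ℝ) < f p.1 <;> by_cases h2 : (t : ℝ) < f p.2 <;>
        simp [hh, h1, h2] at hgt ⊢ <;>
        first
          | exact lt_of_le_of_lt (le_of_not_gt h2) h1
          | exact absurd hgt (by norm_num)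
    exact Nat.card_le_card_of_injective (fun q => ⟨q.1, himp q.1 q.2⟩)
      (fun a b hab => Subtype.ext (Subtype.mk_eq_mk.mp hab))
  -- each threshold function is boolean valued
  have hboolval : ∀ t, ∀ y, h t y = 0 ∨ h t y = 1 := by
    intro t y
    by_cases hy : (t : ℝ) < f y
    · right; simp [hh, hy]
    · left; simp [hh, hy]
  -- each threshold function has small violation
  have hIt : ∀ t, (totViol d (h t) : ℝ) / 2 ^ d ≤ Real.sqrt d := by
    intro t
    refine le_trans ?_ hI
    have : (totViol d (h t) : ℝ) ≤ (totViol d f : ℝ) := Nat.cast_le.mpr (hviol t)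
    exact div_le_div_of_nonneg_right this (by positivity) |>.trans_eq rfl
  -- (2) pointwise: non-persistent for f implies non-persistent for some threshold
  have key : ∀ x : Fin d → Bool, ¬ RightPersistent d τ f x →
      ∃ t ∈ Finset.Icc 1 (r - 1), ¬ RightPersistent d τ (h t) x := by
    intro x hx
    obtain ⟨n, hn1, hnr, hfx⟩ := hf x
    by_cases hcase : n = r
    · exfalso
      apply hx
      intro hτc
      have hall : ∀ T : Finset (Fin d), T ⊆ zeroSet x → T.card = τ →
          f (flipUp x T) ≤ f x := by
        intro T _ _
        obtain ⟨m, hm1, hmr, hfm⟩ := hf (flipUp x T)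
        rw [hfm, hfx, hcase]
        exact_mod_cast hmr
      have hcardeq : Nat.card {T : Finset (Fin d) //
            T ⊆ zeroSet x ∧ T.card = τ ∧ f (flipUp x T) ≤ f x} =
          Nat.card {T : Finset (Fin d) // T ⊆ zeroSet x ∧ T.card = τ} :=
        Nat.card_congr (Equiv.subtypeEquivRight fun T =>
          ⟨fun ⟨a, b, _⟩ => ⟨a, b⟩, fun ⟨a, b⟩ => ⟨a, b, hall T a b⟩⟩)
      obtain ⟨T, hT, hTc⟩ := Finset.exists_subset_card_eq hτc
      haveI : Nonempty {T : Finset (Fin d) // T ⊆ zeroSet x ∧ T.card = τ} :=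
        ⟨⟨T, hT, hTc⟩⟩
      have hpos : 0 < (Nat.card {T : Finset (Fin d) // T ⊆ zeroSet x ∧ T.card = τ} : ℝ) := by
        exact_mod_cast Nat.card_pos
      rw [hcardeq, div_self (ne_of_gt hpos)]
      norm_num
    · have hnlt : n ≤ r - 1 := by omega
      refine ⟨n, Finset.mem_Icc.mpr ⟨hn1, hnlt⟩, ?_⟩
      intro hper
      apply hx
      intro hτc
      have H := hper hτc
      have hx0 : h n x = 0 := by
        simp only [hh]
        rw [if_neg]
        rw [hfx]
        exact lt_irrefl _
      have keyiff : ∀ y : Fin d → Bool, (f y ≤ f x ↔ h n y ≤ h n x) := by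
        intro y
        rw [hx0]
        simp only [hh]
        split_ifs with hy
        · constructor
          · intro hle
            rw [hfx] at hle
            exact absurd (hy.trans_le hle) (lt_irrefl _)
          · intro hle; linarith
        · constructor
          · intro _; exact le_refl _
          · intro _; rw [hfx]; exact le_of_not_gt hy
      have hcardeq : Nat.card {T : Finset (Fin d) //
            T ⊆ zeroSet x ∧ T.card = τ ∧ f (flipUp x T) ≤ f x} =
          Nat.card {T : Finset (Fin d) //
            T ⊆ zeroSet x ∧ T.card = τ ∧ h n (flipUp x T) ≤ h n x} :=
        Nat.card_congr (Equiv.subtypeEquivRight fun T =>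
          and_congr_right fun _ => and_congr_right fun _ => keyiff _)
      rw [hcardeq]
      exact H
  -- counting
  set A : Finset (Fin d → Bool) :=
    Finset.univ.filter (fun x => ¬ RightPersistent d τ f x) with hA
  set B : ℕ → Finset (Fin d → Bool) :=
    fun t => Finset.univ.filter (fun x => ¬ RightPersistent d τ (h t) x) with hB
  have hAcard : (Nat.card {x : Fin d → Bool // ¬ RightPersistent d τ f x}) = A.card := by
    rw [Nat.card_eq_fintype_card, hA]
    exact Fintype.card_subtype _
  have hBcard : ∀ t, (Nat.card {x : Fin d → Bool // ¬ RightPersistent d τ (h t) x}) =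
      (B t).card := by
    intro t
    rw [Nat.card_eq_fintype_card, hB]
    exact Fintype.card_subtype _
  have hsub : A ⊆ (Finset.Icc 1 (r - 1)).biUnion B := by
    intro x hxA
    rw [hA, Finset.mem_filter] at hxA
    obtain ⟨t, ht, hnp⟩ := key x hxA.2
    exact Finset.mem_biUnion.mpr ⟨t, ht, by
      rw [hB]; exact Finset.mem_filter.mpr ⟨Finset.mem_univ x, hnp⟩⟩
  have hcardA : A.card ≤ ∑ t ∈ Finset.Icc 1 (r - 1), (B t).card :=
    le_trans (Finset.card_le_card hsub) Finset.card_biUnion_le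
  have step : ∀ t ∈ Finset.Icc 1 (r - 1), ((B t).card : ℝ) / 2 ^ d ≤ c * τ / Real.sqrt d := by
    intro t _
    rw [← hBcard t]
    exact hBool (h t) (hboolval t) (hIt t)
  have hpow : (0 : ℝ) < 2 ^ d := by positivity
  rw [hAcard]
  calc (A.card : ℝ) / 2 ^ d
      ≤ (∑ t ∈ Finset.Icc 1 (r - 1), ((B t).card : ℝ)) / 2 ^ d := by
        apply div_le_div_of_nonneg_right _ hpow.le
        exact_mod_cast hcardA
    _ = ∑ t ∈ Finset.Icc 1 (r - 1), ((B t).card : ℝ) / 2 ^ d := Finset.sum_div _ _ _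
    _ ≤ ∑ t ∈ Finset.Icc 1 (r - 1), c * τ / Real.sqrt d := Finset.sum_le_sum step
    _ = ((Finset.Icc 1 (r - 1)).card : ℝ) * (c * τ / Real.sqrt d) := by
        rw [Finset.sum_const, nsmul_eq_mul]
    _ = ((r : ℝ) - 1) * c * τ / Real.sqrt d := by
        rw [Nat.card_Icc]
        have : ((r - 1 + 1 - 1 : ℕ) : ℝ) = (r : ℝ) - 1 := by
          have : r - 1 + 1 - 1 = r - 1 := by omega
          rw [this, Nat.cast_sub (by omega)]
          norm_num
        rw [this]
        ring
end

section
/- For every function f : {0,1}^d → ℝ: (a) ε(f) is at least half the fraction of directed hypercube edges violated by f, i.e., ε(f) ≥ |S_f^-| / (2 · d · 2^{d−1}); and (b) for every set S ⊆ [d], ε(f) ≥ μ_f(S) / 2. -/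
/-- A function on the hypercube is monotone if it respects the coordinatewise order. -/
def MonotoneCube {d : ℕ} (g : (Fin d → Bool) → ℝ) : Prop :=
  ∀ x y : Fin d → Bool, (∀ i, x i ≤ y i) → g x ≤ g y

/-- Distance to monotonicity. -/
noncomputable def distMono (d : ℕ) (f : (Fin d → Bool) → ℝ) : ℝ :=
  ((sInf {n : ℕ | ∃ g : (Fin d → Bool) → ℝ, MonotoneCube g ∧
      n = Nat.card {x : Fin d → Bool // f x ≠ g x}} : ℕ) : ℝ) / 2 ^ d

/-- `x` with its `i`-th coordinate flipped. -/
def flipC {d : ℕ} (x : Fin d → Bool) (i : Fin d) : Fin d → Bool :=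
  Function.update x i (!x i)

/-- The directed hypercube edge between `u` and `u^{(j)}` (directed from the endpoint
whose `j`-th coordinate is `false`) is violated by `f`. -/
def EdgeViol {d : ℕ} (f : (Fin d → Bool) → ℝ) (u : Fin d → Bool) (j : Fin d) : Prop :=
  (u j = false ∧ f u > f (flipC u j)) ∨ (u j = true ∧ f (flipC u j) > f u)

/-- The event `Capture(x, S, f)`. -/
def Capture (d : ℕ) (f : (Fin d → Bool) → ℝ) (S : Finset (Fin d))
    (x : Fin d → Bool) : Prop :=
  ∃ i ∈ S, EdgeViol f x i ∧ ∀ j ∈ S, j ≠ i → ¬ EdgeViol f (flipC x i) j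

/-- `μ_f(S)`: the probability of `Capture(x, S, f)` for uniform `x`. -/
noncomputable def muF (d : ℕ) (f : (Fin d → Bool) → ℝ) (S : Finset (Fin d)) : ℝ :=
  (Nat.card {x : Fin d → Bool // Capture d f S x} : ℝ) / 2 ^ d

lemma flipC_flipC {d : ℕ} (x : Fin d → Bool) (i : Fin d) : flipC (flipC x i) i = x := by
  funext j
  rcases eq_or_ne j i with rfl | h
  · simp [flipC]
  · simp [flipC, Function.update_of_ne h]

lemma flipC_self {d : ℕ} (x : Fin d → Bool) (i : Fin d) : flipC x i i = !x i := by
  simp [flipC]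

lemma flipC_ne {d : ℕ} (x : Fin d → Bool) {i j : Fin d} (h : j ≠ i) : flipC x i j = x j := by
  simp [flipC, Function.update_of_ne h]

lemma edgeViol_flip {d : ℕ} (f : (Fin d → Bool) → ℝ) (x : Fin d → Bool) (i : Fin d)
    (h : EdgeViol f x i) : EdgeViol f (flipC x i) i := by
  rcases h with ⟨hx, hlt⟩ | ⟨hx, hlt⟩
  · right; exact ⟨by simp [flipC_self, hx], by rwa [flipC_flipC]⟩
  · left; exact ⟨by simp [flipC_self, hx], by rwa [flipC_flipC]⟩

lemma disagree {d : ℕ} {f g : (Fin d → Bool) → ℝ} (hg : MonotoneCube g)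
    {x : Fin d → Bool} {i : Fin d} (h : EdgeViol f x i) :
    f x ≠ g x ∨ f (flipC x i) ≠ g (flipC x i) := by
  by_contra hc
  push_neg at hc
  obtain ⟨h1, h2⟩ := hc
  rcases h with ⟨hx, hlt⟩ | ⟨hx, hlt⟩
  · have := hg x (flipC x i) (fun j => by
      rcases eq_or_ne j i with rfl | hj
      · simp [flipC_self, hx]
      · rw [flipC_ne x hj])
    rw [h1, h2] at hlt; linarith
  · have := hg (flipC x i) x (fun j => by
      rcases eq_or_ne j i with rfl | hj
      · simp [flipC_self, hx]
      · rw [flipC_ne x hj])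
    rw [h1, h2] at hlt; linarith

lemma edge_eq {d : ℕ} {x y : Fin d → Bool} {i : Fin d}
    (hx : x i = false) (hy : y i = true) (hagree : ∀ j, j ≠ i → x j = y j) :
    y = flipC x i := by
  funext j
  rcases eq_or_ne j i with rfl | h
  · rw [hy, flipC_self, hx]; rfl
  · rw [flipC_ne x h, (hagree j h).symm]

lemma totViol_le {d : ℕ} (f g : (Fin d → Bool) → ℝ) (hg : MonotoneCube g) :
    totViol d f ≤ d * Nat.card {x : Fin d → Bool // f x ≠ g x} := by
  classical
  have key : ∀ p : {p : (Fin d → Bool) × (Fin d → Bool) // IsEdge p.1 p.2 ∧ f p.1 > f p.2},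
      ∃ q : Fin d × {x : Fin d → Bool // f x ≠ g x},
        p.1.1 = (if q.2.1 q.1 = false then q.2.1 else flipC q.2.1 q.1) ∧
        p.1.2 = flipC p.1.1 q.1 := by
    rintro ⟨⟨x, y⟩, ⟨⟨i, hx, hy, hagree⟩, hlt⟩⟩
    have hyx : y = flipC x i := edge_eq hx hy hagree
    have hviol : EdgeViol f x i := Or.inl ⟨hx, by rwa [← hyx]⟩
    rcases disagree hg hviol with hdis | hdis
    · exact ⟨(i, ⟨x, hdis⟩), by rw [if_pos hx], hyx⟩
    · refine ⟨(i, ⟨flipC x i, hdis⟩), ?_, hyx⟩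
      have hx' : x i = false := hx
      have hcond : flipC x i i = true := by simp [flipC_self, hx']
      rw [if_neg (by simp [hcond]), flipC_flipC]
  choose F hF1 hF2 using key
  have hinj : Function.Injective F := by
    intro p q h
    have e1 := hF1 p
    have e2 := hF2 p
    rw [h] at e1 e2
    have h1 : p.1.1 = q.1.1 := e1.trans (hF1 q).symm
    have h2 : p.1.2 = q.1.2 := by rw [e2, hF2 q, h1]
    exact Subtype.ext (Prod.ext h1 h2)
  calc totViol d f ≤ Nat.card (Fin d × {x : Fin d → Bool // f x ≠ g x}) :=
        Nat.card_le_card_of_injective F hinj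
    _ = d * Nat.card {x : Fin d → Bool // f x ≠ g x} := by
        rw [Nat.card_prod, Nat.card_eq_fintype_card, Fintype.card_fin]

lemma capture_le {d : ℕ} (f g : (Fin d → Bool) → ℝ) (hg : MonotoneCube g)
    (S : Finset (Fin d)) :
    Nat.card {x : Fin d → Bool // Capture d f S x} ≤
      2 * Nat.card {x : Fin d → Bool // f x ≠ g x} := by
  classical
  have hcap : ∀ p : {x : Fin d → Bool // Capture d f S x},
      ∃ i, i ∈ S ∧ EdgeViol f p.1 i ∧ ∀ j ∈ S, j ≠ i → ¬ EdgeViol f (flipC p.1 i) j := by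
    rintro ⟨x, ⟨i, hiS, hv, hn⟩⟩
    exact ⟨i, hiS, hv, hn⟩
  choose I hIS hIV hIN using hcap
  have hdis : ∀ p : {x : Fin d → Bool // Capture d f S x}, f p.1 = g p.1 →
      f (flipC p.1 (I p)) ≠ g (flipC p.1 (I p)) := by
    intro p h
    rcases disagree hg (hIV p) with h' | h'
    · exact absurd h h'
    · exact h'
  let F : {x : Fin d → Bool // Capture d f S x} → Bool × {x : Fin d → Bool // f x ≠ g x} :=
    fun p =>
      if h : f p.1 ≠ g p.1 then (true, ⟨p.1, h⟩)
      else (false, ⟨flipC p.1 (I p), hdis p (not_not.mp h)⟩)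
  have hinj : Function.Injective F := by
    intro p q h
    by_cases hp : f p.1 ≠ g p.1 <;> by_cases hq : f q.1 ≠ g q.1
    · simp only [F, dif_pos hp, dif_pos hq, Prod.mk.injEq, Subtype.mk.injEq] at h
      exact Subtype.ext h.2
    · simp only [F, dif_pos hp, dif_neg hq, Prod.mk.injEq] at h
      exact absurd h.1 (by simp)
    · simp only [F, dif_neg hp, dif_pos hq, Prod.mk.injEq] at h
      exact absurd h.1 (by simp)
    · simp only [F, dif_neg hp, dif_neg hq, Prod.mk.injEq, Subtype.mk.injEq] at h
      have hy : flipC p.1 (I p) = flipC q.1 (I q) := h.2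
      rcases eq_or_ne (I p) (I q) with hI | hI
      · have : p.1 = q.1 := by
          have := congrArg (fun z => flipC z (I p)) hy
          simpa [flipC_flipC, hI] using this
        exact Subtype.ext this
      · exfalso
        have hv : EdgeViol f (flipC q.1 (I q)) (I q) := edgeViol_flip f q.1 (I q) (hIV q)
        rw [← hy] at hv
        exact hIN p (I q) (hIS q) (Ne.symm hI) hv
  calc Nat.card {x : Fin d → Bool // Capture d f S x}
      ≤ Nat.card (Bool × {x : Fin d → Bool // f x ≠ g x}) :=
        Nat.card_le_card_of_injective F hinj
    _ = 2 * Nat.card {x : Fin d → Bool // f x ≠ g x} := by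
        rw [Nat.card_prod, Nat.card_eq_fintype_card, Fintype.card_bool]

/-- The distance to monotonicity is at least half the fraction of violated edges and
at least `μ_f(S)/2` for every `S ⊆ [d]`. -/
theorem dist_lower_bounds (d : ℕ) (hd : 1 ≤ d) (f : (Fin d → Bool) → ℝ) :
    distMono d f ≥ (totViol d f : ℝ) / (2 * d * 2 ^ (d - 1)) ∧
    ∀ S : Finset (Fin d), distMono d f ≥ muF d f S / 2 := by
  classical
  obtain ⟨g, hg, hm⟩ := Nat.sInf_mem (s := {n : ℕ | ∃ g : (Fin d → Bool) → ℝ,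
      MonotoneCube g ∧ n = Nat.card {x : Fin d → Bool // f x ≠ g x}})
    ⟨Nat.card {x : Fin d → Bool // f x ≠ (fun _ => (0:ℝ)) x},
      ⟨fun _ => (0:ℝ), fun _ _ _ => le_refl 0, rfl⟩⟩
  have hdm : distMono d f = (Nat.card {x : Fin d → Bool // f x ≠ g x} : ℝ) / 2 ^ d := by
    rw [distMono, hm]
  set m : ℕ := Nat.card {x : Fin d → Bool // f x ≠ g x} with hmdef
  have h2 : (0:ℝ) < 2 ^ d := by positivity
  have hd0 : (0:ℝ) < d := by exact_mod_cast hd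
  constructor
  · have hA : (totViol d f : ℝ) ≤ d * m := by exact_mod_cast totViol_le f g hg
    rw [hdm]
    have hden : (2 * d * 2 ^ (d-1) : ℝ) = d * 2 ^ d := by
      have hpow : (2:ℝ)^d = 2^(d-1) * 2 := by
        rw [← pow_succ, Nat.sub_add_cancel hd]
      rw [hpow]; ring
    rw [ge_iff_le, hden, div_le_div_iff₀ (mul_pos hd0 h2) h2]
    have := mul_le_mul_of_nonneg_right hA h2.le
    nlinarith
  · intro S
    have hB : (Nat.card {x : Fin d → Bool // Capture d f S x} : ℝ) ≤ 2 * m := by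
      exact_mod_cast capture_le f g hg S
    rw [hdm, muF, ge_iff_le, div_div, div_le_div_iff₀ (by positivity) h2]
    have := mul_le_mul_of_nonneg_right hB h2.le
    nlinarith
end

section
/- There exists a universal constant c > 0 such that, in the lower-bound construction, for every valid choice of d and r and every i ∈ [d], the function f_i satisfies ε(f_i) ≥ c. -/
/-- The hard function `f_i` of the lower-bound construction, for `d = m²` odd,
`r ∣ 2m + 1` and `w = (2m+1)/r`. Here `wt = |x_{-i}|` (the weight of `x` with its `i`-th
coordinate removed), `lo = (d-1)/2 - √d`, `hi = (d-1)/2 + √d`, and in the middle range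
the block index is `j = (wt - lo)/w + 1`, so that `(j-1)·w ≤ wt - lo < j·w`;
the value is `j + (1 - x_i)`. -/
noncomputable def lbF (d m r : ℕ) (i : Fin d) (x : Fin d → Bool) : ℝ :=
  let wt : ℤ := ((Finset.univ.filter (fun j : Fin d => j ≠ i ∧ x j = true)).card : ℤ)
  let lo : ℤ := ((d : ℤ) - 1) / 2 - (m : ℤ)
  let hi : ℤ := ((d : ℤ) - 1) / 2 + (m : ℤ)
  let w : ℤ := (2 * (m : ℤ) + 1) / (r : ℤ)
  if hi < wt then (r : ℝ)
  else if wt < lo then 1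
  else (((wt - lo) / w + 1 : ℤ) : ℝ) + (if x i = true then 0 else 1)


/-! Along direction `i`, `f_i` drops by one on every edge whose endpoints lie in the middle
layers `|2|x_{-i}| - (d - 1)| ≤ 2√d`, so a monotone function disagrees with `f_i` at an endpoint of
each such edge. The weight of a uniform point of the `(d-1)`-cube has variance `(d-1)/4`
(write it as a sum of independent `±1` spins), so by Chebyshev at least half of the cube lies in
the middle layers, and every monotone function disagrees with `f_i` on a quarter of the cube. -/

open Finset

section Flip

variable {ι : Type*} [DecidableEq ι]

def flipAt (i : ι) (x : ι → Bool) : ι → Bool := Function.update x i (!x i)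

@[simp] lemma flipAt_apply_self (i : ι) (x : ι → Bool) : flipAt i x i = !x i := by
  simp [flipAt]

lemma flipAt_apply_of_ne {i j : ι} (h : j ≠ i) (x : ι → Bool) : flipAt i x j = x j :=
  Function.update_of_ne h _ _

lemma flipAt_involutive (i : ι) : Function.Involutive (flipAt i) := by
  intro x; simp [flipAt]

end Flip

lemma card_le_two_mul_card_filter_abs_le {α : Type*} [Fintype α] (f : α → ℤ) (t : ℕ)
    (h : 2 * ∑ x, f x ^ 2 ≤ (t + 1) ^ 2 * Fintype.card α) :
    Fintype.card α ≤ 2 * #(univ.filter fun x => |f x| ≤ t) := by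
  set bad := univ.filter fun x => ¬ |f x| ≤ t
  have hsplit : #(univ.filter fun x => |f x| ≤ t) + #bad = Fintype.card α :=
    card_filter_add_card_filter_not _
  have hf (x) (hx : x ∈ bad) : ((t : ℤ) + 1) ^ 2 ≤ f x ^ 2 := by
    rw [← sq_abs (f x)]
    have : (t : ℤ) + 1 ≤ |f x| := by simp only [bad, mem_filter] at hx; omega
    gcongr
  have hmarkov : (#bad : ℤ) * (t + 1) ^ 2 ≤ ∑ x, f x ^ 2 := calc
    (#bad : ℤ) * (t + 1) ^ 2 ≤ ∑ x ∈ bad, f x ^ 2 := by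
      simpa using card_nsmul_le_sum bad _ _ hf
    _ ≤ ∑ x, f x ^ 2 :=
      sum_le_sum_of_subset_of_nonneg (subset_univ _) fun x _ _ => sq_nonneg _
  have hbad : 2 * (#bad : ℤ) ≤ Fintype.card α := by
    have hpos : (0 : ℤ) < (t + 1) ^ 2 := by positivity
    nlinarith
  omega

section Cube

variable {ι : Type*}

def spin (b : Bool) : ℤ := if b then 1 else -1

lemma spin_mul_self (b : Bool) : spin b * spin b = 1 := by
  cases b <;> rfl

lemma sum_spin (S : Finset ι) (x : ι → Bool) :
    ∑ j ∈ S, spin (x j) = 2 * #(S.filter (x · = true)) - #S := by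
  have hT : ∀ j ∈ S.filter (x · = true), spin (x j) = 1 := by
    intro j hj; simp [spin, (mem_filter.1 hj).2]
  have hF : ∀ j ∈ S.filter (¬ x · = true), spin (x j) = -1 := by
    intro j hj; simp [spin, (mem_filter.1 hj).2]
  have hcard := card_filter_add_card_filter_not (s := S) (x · = true)
  rw [← sum_filter_add_sum_filter_not S (x · = true), sum_congr rfl hT, sum_congr rfl hF]
  simp only [sum_const, smul_neg, nsmul_eq_mul, mul_one]
  omega

variable [Fintype ι] [DecidableEq ι]

lemma sum_spin_mul_spin_of_ne {j k : ι} (h : j ≠ k) :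
    ∑ x : ι → Bool, spin (x j) * spin (x k) = 0 := by
  have hanti (x : ι → Bool) :
      spin (flipAt j x j) * spin (flipAt j x k) = -(spin (x j) * spin (x k)) := by
    rw [flipAt_apply_self, flipAt_apply_of_ne h.symm]
    cases x j <;> cases x k <;> rfl
  have := Equiv.sum_comp (flipAt_involutive j).toPerm (fun x : ι → Bool => spin (x j) * spin (x k))
  simp only [Function.Involutive.coe_toPerm, hanti, sum_neg_distrib] at this
  linarith

lemma sum_sq_two_mul_card_filter_sub_card (S : Finset ι) :
    ∑ x : ι → Bool, (2 * #(S.filter (x · = true)) - #S : ℤ) ^ 2 =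
      #S * 2 ^ Fintype.card ι := by
  have hdiag (j k : ι) : ∑ x : ι → Bool, spin (x j) * spin (x k) =
      if j = k then 2 ^ Fintype.card ι else 0 := by
    split_ifs with h
    · subst h; simp [spin_mul_self]
    · exact sum_spin_mul_spin_of_ne h
  simp_rw [← sum_spin, sq, sum_mul_sum]
  rw [sum_comm]
  simp [sum_comm (γ := ι → Bool), hdiag]

def middleLayers (S : Finset ι) (m : ℕ) : Finset (ι → Bool) :=
  univ.filter fun x => |(2 * #(S.filter (x · = true)) - #S : ℤ)| ≤ 2 * m

lemma two_pow_le_two_mul_card_middleLayers (S : Finset ι) (m : ℕ)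
    (hS : 2 * #S ≤ (2 * m + 1) ^ 2) :
    2 ^ Fintype.card ι ≤ 2 * #(middleLayers S m) := by
  have := card_le_two_mul_card_filter_abs_le
    (fun x : ι → Bool => (2 * #(S.filter (x · = true)) - #S : ℤ)) (2 * m) (by
      rw [sum_sq_two_mul_card_filter_sub_card, Fintype.card_fun, Fintype.card_bool]
      push_cast
      rw [← mul_assoc]
      gcongr
      exact_mod_cast hS)
  simpa [middleLayers, Fintype.card_fun] using this

end Cube

lemma card_le_two_mul_card_of_forall_mem_or_mem {α : Type*} [DecidableEq α] {σ : α → α}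
    (hσ : Function.Involutive σ) {A D : Finset α} (h : ∀ x ∈ A, x ∈ D ∨ σ x ∈ D) :
    #A ≤ 2 * #D := calc
  #A ≤ #(D ∪ D.image σ) := card_le_card fun x hx =>
    (h x hx).elim (mem_union_left _) fun hσx => mem_union_right _ (mem_image.2 ⟨σ x, hσx, hσ x⟩)
  _ ≤ #D + #(D.image σ) := card_union_le _ _
  _ ≤ 2 * #D := by linarith [card_image_le (s := D) (f := σ)]

lemma MonotoneCube.ne_or_ne_of_lt {d : ℕ} {f g : (Fin d → Bool) → ℝ} (hg : MonotoneCube g)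
    {x y : Fin d → Bool} (hxy : ∀ j, x j ≤ y j) (hf : f y < f x) : f x ≠ g x ∨ f y ≠ g y := by
  by_contra! h
  linarith [hg x y hxy]

lemma le_distMono {d : ℕ} {f : (Fin d → Bool) → ℝ} {c : ℝ}
    (h : ∀ g, MonotoneCube g → c * 2 ^ d ≤ #(univ.filter fun x => f x ≠ g x)) :
    c ≤ distMono d f := by
  rw [distMono, le_div_iff₀ (by positivity)]
  obtain ⟨g, hg, hn⟩ := Nat.sInf_mem (⟨_, 0, fun _ _ _ => le_rfl, rfl⟩ :
    {n : ℕ | ∃ g : (Fin d → Bool) → ℝ, MonotoneCube g ∧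
      n = Nat.card {x : Fin d → Bool // f x ≠ g x}}.Nonempty)
  rw [hn, Nat.card_eq_fintype_card, Fintype.card_subtype]
  exact h g hg

section LowerBoundFunction

variable {d m r : ℕ} {i : Fin d}

lemma lbF_update_false_eq (hd : Odd d) {x : Fin d → Bool}
    (hx : x ∈ middleLayers (univ.erase i) m) :
    lbF d m r i (Function.update x i false) = lbF d m r i (Function.update x i true) + 1 := by
  have hwt (b : Bool) : (univ.filter fun j => j ≠ i ∧ Function.update x i b j = true) =
      univ.filter fun j => j ≠ i ∧ x j = true :=
    filter_congr fun j _ => and_congr_right fun hj => by rw [Function.update_of_ne hj]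
  rw [middleLayers, mem_filter, ← filter_ne', filter_filter, filter_ne',
    card_erase_of_mem (mem_univ i), card_univ, Fintype.card_fin, abs_le] at hx
  obtain ⟨t, rfl⟩ := hd
  simp only [lbF, hwt, Function.update_self, Bool.false_eq_true, ↓reduceIte]
  split_ifs <;> first | omega | norm_num

lemma lbF_ne_or_flipAt_ne {g : (Fin d → Bool) → ℝ} (hg : MonotoneCube g) (hd : Odd d)
    {x : Fin d → Bool} (hx : x ∈ middleLayers (univ.erase i) m) :
    lbF d m r i x ≠ g x ∨ lbF d m r i (flipAt i x) ≠ g (flipAt i x) := by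
  have hle (j : Fin d) : Function.update x i false j ≤ Function.update x i true j := by
    rcases eq_or_ne j i with rfl | hj
    · simp
    · simp [Function.update_of_ne hj]
  have key := hg.ne_or_ne_of_lt (f := lbF d m r i) hle
    (by rw [lbF_update_false_eq hd hx]; linarith)
  cases hxi : x i
  · rwa [show Function.update x i false = x by rw [← hxi, Function.update_eq_self],
      show Function.update x i true = flipAt i x by simp [flipAt, hxi]] at key
  · rwa [show Function.update x i true = x by rw [← hxi, Function.update_eq_self],
      show Function.update x i false = flipAt i x by simp [flipAt, hxi], or_comm] at key

end LowerBoundFunction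

/-- In the lower-bound construction, every `f_i` is `Ω(1)`-far from monotone. -/
theorem lb_functions_far_from_monotone :
    ∃ c : ℝ, 0 < c ∧ ∀ d m r : ℕ, d = m ^ 2 → Odd d → 2 ≤ r → r ∣ 2 * m + 1 →
      ∀ i : Fin d, distMono d (lbF d m r i) ≥ c := by
  refine ⟨1 / 4, by norm_num, fun d m r hd hodd _ _ i => le_distMono fun g hg => ?_⟩
  have hcentral := two_pow_le_two_mul_card_middleLayers (univ.erase i) m (by
    rw [card_erase_of_mem (mem_univ i), card_univ, Fintype.card_fin, hd]
    nlinarith [Nat.sub_le (m ^ 2) 1, Nat.zero_le m])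
  have hpairs := card_le_two_mul_card_of_forall_mem_or_mem (flipAt_involutive i)
    (D := univ.filter fun x => lbF d m r i x ≠ g x) fun x hx => by
      simpa using lbF_ne_or_flipAt_ne (r := r) hg hodd hx
  rw [Fintype.card_fin] at hcentral
  have : (2 : ℝ) ^ d ≤ 4 * #(univ.filter fun x => lbF d m r i x ≠ g x) := by
    exact_mod_cast (by omega : 2 ^ d ≤ 4 * #(univ.filter fun x => lbF d m r i x ≠ g x))
  linarith
end
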